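/- arXiv:1508.06881 — 4 statements merged into one kernel-verified Lean document; each statement's English description precedes it below -/
import Mathlib

section
/- For every n ≥ 1 and 1 ≤ r ≤ n, the Gårding cone Γ_r is a convex subset of ℝⁿ: if λ, μ ∈ Γ_r and t ∈ [0,1], then tλ + (1−t)μ ∈ Γ_r. -/
/-- The `r`-th elementary symmetric function of `x : Fin n → ℝ`. -/
def esymm (n r : ℕ) (x : Fin n → ℝ) : ℝ :=
  ∑ s ∈ Finset.powersetCard r (Finset.univ : Finset (Fin n)), ∏ i ∈ s, x i

/-- The Gårding cone `Γ_r = {x ∈ ℝⁿ : S_j(x) > 0 for j = 1, …, r}`. -/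
def gardingCone (n r : ℕ) : Set (Fin n → ℝ) :=
  {x | ∀ j : ℕ, 1 ≤ j → j ≤ r → 0 < esymm n j x}

/-!
The cone `Γ_m` is the hyperbolicity cone of `S_m` in the direction `e = (1, …, 1)`, and the
argument is Gårding's. Along `e`, `s ↦ S_m(u + s e)` is a Hasse derivative of `∏ (s + u_i)`: by
Gauss–Lucas its roots are real, and its coefficients are positive multiples of the `S_j(u)`, so
`Γ_m` is star-shaped around `e`. For `d ∈ Γ_m` and `τ ≠ 0`, the roots of `s ↦ S_m(u + iτe + s d)`
never become real while the direction moves from `e` to `d` inside `Γ_m`, so they stay in the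
half-plane where they start; letting `τ → 0` shows that `s ↦ S_m(u + s d)` has only real roots.
For `x, y ∈ Γ_m`, these real roots of `s ↦ S_m(y + s x)` never pass through `0` while `y` moves
to `e`, where they are all negative; hence `S_m(x + y) > 0`, and `Γ_r` is a convex cone.
-/

open Polynomial Finset Filter Topology

namespace GardingCone

variable {n m : ℕ}

theorem continuous_coeff_prod {T ι S : Type*} [TopologicalSpace T] [CommSemiring S]
    [TopologicalSpace S] [IsTopologicalSemiring S] (s : Finset ι) {p : ι → T → S[X]}
    (hp : ∀ i ∈ s, ∀ j, Continuous fun t => (p i t).coeff j) (j : ℕ) :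
    Continuous fun t => (∏ i ∈ s, p i t).coeff j := by
  classical
  induction s using Finset.induction_on generalizing j with
  | empty => simpa using continuous_const
  | insert i s hi ih =>
    simp only [prod_insert hi, coeff_mul]
    exact continuous_finsetSum _ fun x _ =>
      (hp i (mem_insert_self i s) x.1).mul (ih (fun k hk => hp k (mem_insert_of_mem hk)) x.2)

section Algebra

variable {R : Type*} [CommRing R]

noncomputable def esymmLine (m : ℕ) (a b : Fin n → R) : R[X] :=
  ∑ s ∈ powersetCard m univ, ∏ i ∈ s, (C (b i) * X + C (a i))

theorem eval_esymmLine (a b : Fin n → R) (z : R) :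
    (esymmLine m a b).eval z = ∑ s ∈ powersetCard m univ, ∏ i ∈ s, (a i + z * b i) := by
  simp only [esymmLine, eval_finsetSum, eval_prod, eval_add, eval_mul, eval_C, eval_X, mul_comm,
    add_comm]

theorem eval_esymmLine_congr {a b a' b' : Fin n → R} {z z' : R}
    (h : ∀ i, a i + z * b i = a' i + z' * b' i) :
    (esymmLine m a b).eval z = (esymmLine m a' b').eval z' := by
  simp only [eval_esymmLine, h]

theorem eval_esymmLine_real (a b : Fin n → ℝ) (s : ℝ) :
    (esymmLine m a b).eval s = esymm n m (a + s • b) := by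
  simp [eval_esymmLine, esymm]

theorem eval_esymmLine_ofReal (a b : Fin n → ℝ) (s : ℝ) :
    (esymmLine m (fun i => (a i : ℂ)) (fun i => (b i : ℂ))).eval (s : ℂ) =
      (((esymmLine m a b).eval s : ℝ) : ℂ) := by
  simp [eval_esymmLine]

theorem natDegree_esymmLine_le (a b : Fin n → R) : (esymmLine m a b).natDegree ≤ m := by
  refine natDegree_sum_le_of_forall_le _ _ fun s hs => ?_
  rw [← (mem_powersetCard.mp hs).2, card_eq_sum_ones]
  exact (natDegree_prod_le _ _).trans (sum_le_sum fun i _ => natDegree_linear_le)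

theorem coeff_esymmLine_self (a b : Fin n → R) :
    (esymmLine m a b).coeff m = ∑ s ∈ powersetCard m univ, ∏ i ∈ s, b i := by
  rw [esymmLine, finsetSum_coeff]
  refine sum_congr rfl fun s hs => ?_
  rw [← (mem_powersetCard.mp hs).2, ← mul_one #s, coeff_prod_of_natDegree_le _ _ _ fun i _ => ?_]
  · simp [coeff_C]
  · exact natDegree_linear_le

theorem degree_esymmLine [Nontrivial R] {a b : Fin n → R}
    (hb : ∑ s ∈ powersetCard m univ, ∏ i ∈ s, b i ≠ 0) : (esymmLine m a b).degree = m :=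
  degree_eq_of_le_of_coeff_ne_zero (degree_le_of_natDegree_le (natDegree_esymmLine_le a b))
    (by rwa [coeff_esymmLine_self])

theorem esymmLine_one_eq_hasseDeriv [IsDomain R] [Infinite R] (hm : m ≤ n) (a : Fin n → R) :
    esymmLine m a 1 = hasseDeriv (n - m) (∏ i, (X + C (a i))) := by
  refine Polynomial.funext fun c => ?_
  have hprod : taylor c (∏ i, (X + C (a i))) = ∏ i, (X + C (a i + c)) := by
    simp only [taylor_apply, Polynomial.prod_comp, add_comp, X_comp, C_comp, C_add]
    exact prod_congr rfl fun i _ => by ring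
  rw [← taylor_coeff, hprod, prod_X_add_C_coeff _ _ (by simp), eval_esymmLine]
  simp [Nat.sub_sub_self hm, add_comm]

theorem continuous_coeff_esymmLine [TopologicalSpace R] [IsTopologicalRing R] {T : Type*}
    [TopologicalSpace T] {a b : T → Fin n → R} (ha : Continuous a) (hb : Continuous b) (j : ℕ) :
    Continuous fun t => (esymmLine m (a t) (b t)).coeff j := by
  simp only [esymmLine, finsetSum_coeff]
  refine continuous_finsetSum _ fun s _ => continuous_coeff_prod s (fun i _ k => ?_) j
  simp only [coeff_add, coeff_C_mul_X, coeff_C]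
  split_ifs <;> fun_prop

end Algebra

theorem esymm_zero (x : Fin n → ℝ) : esymm n 0 x = 1 := by
  simp [esymm]

theorem esymm_smul (c : ℝ) (x : Fin n → ℝ) : esymm n m (c • x) = c ^ m * esymm n m x := by
  simp only [esymm, mul_sum, Pi.smul_apply, smul_eq_mul]
  refine sum_congr rfl fun s hs => ?_
  rw [prod_mul_distrib, prod_const, (mem_powersetCard.mp hs).2]

theorem le_of_esymm_ne_zero {x : Fin n → ℝ} (h : esymm n m x ≠ 0) : m ≤ n := by
  by_contra! hnm
  apply h
  rw [esymm, powersetCard_eq_empty.mpr (by rwa [card_univ, Fintype.card_fin]), sum_empty]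

theorem coeff_prod_X_add_C_eq_esymm {k : ℕ} (hk : k ≤ n) (u : Fin n → ℝ) :
    (∏ i, (X + C (u i))).coeff k = esymm n (n - k) u := by
  rw [prod_X_add_C_coeff _ _ (by simpa using hk)]
  simp [esymm]

theorem degree_esymmLine_ofReal (a : Fin n → ℂ) {b : Fin n → ℝ} (hb : esymm n m b ≠ 0) :
    (esymmLine m a fun i => (b i : ℂ)).degree = m := by
  refine degree_esymmLine ?_
  have hcast : ∑ s ∈ powersetCard m univ, ∏ i ∈ s, (b i : ℂ) = (esymm n m b : ℂ) := by
    simp [esymm]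
  rw [hcast]
  exact_mod_cast hb

theorem rootSet_iterate_derivative_subset {P : ℂ[X]} {S : Set ℂ} (hS : Convex ℝ S)
    (hP : P.rootSet ℂ ⊆ S) (k : ℕ) : (derivative^[k] P).rootSet ℂ ⊆ S := by
  induction k with
  | zero => exact hP
  | succ k ih =>
    rw [Function.iterate_succ_apply']
    rcases lt_or_ge 0 (derivative^[k] P).degree with hpos | hle
    · exact (rootSet_derivative_subset_convexHull_rootSet hpos).trans (convexHull_min ih hS)
    · rw [eq_C_of_degree_le_zero hle, derivative_C, rootSet_zero]
      exact Set.empty_subset S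

theorem im_eq_zero_of_eval_esymmLine_one (hm : m ≤ n) (v : Fin n → ℝ) {z : ℂ}
    (hz : (esymmLine m (fun i => (v i : ℂ)) 1).eval z = 0) : z.im = 0 := by
  set P : ℂ[X] := ∏ i, (X + C (v i : ℂ))
  have hroots : P.rootSet ℂ ⊆ {w | w.im = 0} := by
    intro w hw
    have hw' : ∏ i, (w + v i) = 0 := by simpa [P, eval_prod] using (mem_rootSet.mp hw).2
    obtain ⟨i, -, hi⟩ := prod_eq_zero_iff.mp hw'
    simpa using congrArg Complex.im (eq_neg_of_add_eq_zero_left hi)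
  have hne : esymmLine m (fun i => (v i : ℂ)) 1 ≠ 0 := by
    have hb : ∑ s ∈ powersetCard m (univ : Finset (Fin n)), ∏ i ∈ s, (1 : Fin n → ℂ) i ≠ 0 := by
      simp [(Nat.choose_pos hm).ne']
    intro h
    simpa [h] using degree_esymmLine (a := fun i => (v i : ℂ)) hb
  have hD : derivative^[n - m] P =
      C ((n - m).factorial : ℂ) * esymmLine m (fun i => (v i : ℂ)) 1 := by
    rw [esymmLine_one_eq_hasseDeriv hm, ← factorial_smul_hasseDeriv]
    simp [P, nsmul_eq_mul]
  refine rootSet_iterate_derivative_subset (convex_hyperplane Complex.imLm.isLinear 0) hroots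
    (n - m) (mem_rootSet.mpr ⟨?_, ?_⟩)
  · rw [hD]
    exact mul_ne_zero (C_ne_zero.mpr (by exact_mod_cast (n - m).factorial_ne_zero)) hne
  · simp [hD, hz]

theorem esymm_add_smul_one_pos (hm : m ≤ n) {u : Fin n → ℝ}
    (hu : ∀ j, 1 ≤ j → j ≤ m → 0 ≤ esymm n j u) {c : ℝ} (hc : 0 < c) :
    0 < esymm n m (u + c • 1) := by
  rw [← eval_esymmLine_real, eval_eq_sum_range' (Nat.lt_succ_of_le (natDegree_esymmLine_le u 1)),
    esymmLine_one_eq_hasseDeriv hm]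
  have hcoeff : ∀ j ≤ m, (hasseDeriv (n - m) (∏ i, (X + C (u i)))).coeff j
      = ((j + (n - m)).choose (n - m) : ℝ) * esymm n (m - j) u := by
    intro j hj
    rw [hasseDeriv_coeff, coeff_prod_X_add_C_eq_esymm (by omega)]
    congr 2
    omega
  refine sum_pos' (fun j hj => ?_) ⟨m, self_mem_range_succ m, ?_⟩
  · have hj : j ≤ m := Nat.lt_succ_iff.mp (mem_range.mp hj)
    have : 0 ≤ esymm n (m - j) u := by
      rcases (m - j).eq_zero_or_pos with h0 | hpos
      · rw [h0, esymm_zero]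
        exact zero_le_one
      · exact hu _ hpos (Nat.sub_le m j)
    rw [hcoeff j hj]
    positivity
  · rw [hcoeff m le_rfl, Nat.sub_self, esymm_zero, mul_one]
    have : 0 < (m + (n - m)).choose (n - m) := Nat.choose_pos (by omega)
    positivity

theorem smul_add_sub_smul_one_mem_gardingCone {d : Fin n → ℝ} (hd : d ∈ gardingCone n m)
    {θ : ℝ} (hθ : θ ∈ Set.Icc (0 : ℝ) 1) : θ • d + (1 - θ) • 1 ∈ gardingCone n m := by
  intro j hj hjm
  rcases hθ.2.eq_or_lt with rfl | hθ1
  · simpa using hd j hj hjm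
  refine esymm_add_smul_one_pos (le_of_esymm_ne_zero (hd j hj hjm).ne') (fun l hl hlj => ?_)
    (sub_pos.mpr hθ1)
  rw [esymm_smul]
  exact mul_nonneg (pow_nonneg hθ.1 l) (hd l hl (hlj.trans hjm)).le

theorem norm_leadingCoeff_mul_pow_le_norm_eval {p : ℂ[X]} {a : ℂ} {ε : ℝ} (hε : 0 ≤ ε)
    (h : ∀ z ∈ p.roots, ε ≤ ‖a - z‖) : ‖p.leadingCoeff‖ * ε ^ p.natDegree ≤ ‖p.eval a‖ := by
  have hs := IsAlgClosed.splits p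
  have hnorm := map_multiset_prod (normHom : ℂ →*₀ ℝ) (p.roots.map fun z => a - z)
  simp only [normHom_apply, Multiset.map_map, Function.comp_def] at hnorm
  rw [hs.eval_eq_prod_roots, norm_mul, hs.natDegree_eq_card_roots, hnorm]
  gcongr
  calc ε ^ Multiset.card p.roots = (p.roots.map fun _ => ε).prod := by simp
    _ ≤ _ := Multiset.prod_map_le_prod_map₀ _ _ (fun _ _ => hε) h

section RootContinuity

variable {T : Type*} [TopologicalSpace T] {P : T → ℂ[X]}

theorem continuous_eval_of_continuous_coeff (hdeg : ∀ t, (P t).natDegree ≤ m)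
    (hcont : ∀ i, Continuous fun t => (P t).coeff i) :
    Continuous fun p : T × ℂ => (P p.1).eval p.2 := by
  simp_rw [eval_eq_sum_range' (Nat.lt_succ_of_le (hdeg _))]
  exact continuous_finsetSum _ fun i _ =>
    ((hcont i).comp continuous_fst).mul (continuous_snd.pow i)

theorem exists_eventually_roots_norm_le (hdeg : ∀ t, (P t).degree = m)
    (hcont : ∀ i, Continuous fun t => (P t).coeff i) (t₀ : T) :
    ∃ r, ∀ᶠ t in 𝓝 t₀, ∀ z ∈ (P t).roots, ‖z‖ ≤ r := by
  have hnat : ∀ t, (P t).natDegree = m := fun t => natDegree_eq_of_degree_eq_some (hdeg t)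
  have hlc : ∀ t, (P t).coeff m ≠ 0 := fun t => by
    rw [← hnat t]
    exact leadingCoeff_ne_zero.mpr (ne_zero_of_coe_le_degree (hdeg t).ge)
  set B : T → ℝ := fun t => (∑ i ∈ range m, ‖(P t).coeff i‖) / ‖(P t).coeff m‖ + 1
  have hB : ∀ t, ∀ z ∈ (P t).roots, ‖z‖ ≤ B t := by
    intro t z hz
    have hroot := IsRoot.norm_lt_cauchyBound (ne_zero_of_coe_le_degree (hdeg t).ge)
      (isRoot_of_mem_roots hz)
    have hcb :
        (P t).cauchyBound ≤ (∑ i ∈ range m, ‖(P t).coeff i‖₊) / ‖(P t).coeff m‖₊ + 1 := by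
      rw [cauchyBound, leadingCoeff, hnat t]
      gcongr
      exact Finset.sup_le fun i hi => single_le_sum (f := fun i => ‖(P t).coeff i‖₊)
        (fun _ _ => zero_le) hi
    have := NNReal.coe_le_coe.mpr (hroot.le.trans hcb)
    simpa [B] using this
  have hBcont : ContinuousAt B t₀ :=
    ((continuous_finsetSum _ fun i _ => (hcont i).norm).continuousAt.div
      (hcont m).norm.continuousAt (norm_ne_zero_iff.mpr (hlc t₀))).add continuousAt_const
  refine ⟨B t₀ + 1, ?_⟩
  filter_upwards [hBcont.eventually (gt_mem_nhds (lt_add_one (B t₀)))] with t ht z hz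
  exact (hB t z hz).trans ht.le

theorem isOpen_setOf_exists_root_mem (hdeg : ∀ t, (P t).degree = m)
    (hcont : ∀ i, Continuous fun t => (P t).coeff i) {W : Set ℂ} (hW : IsOpen W) :
    IsOpen {t | ∃ z ∈ (P t).roots, z ∈ W} := by
  rw [isOpen_iff_mem_nhds]
  rintro t₀ ⟨a, ha, haW⟩
  obtain ⟨ε, hε, hball⟩ := Metric.isOpen_iff.mp hW a haW
  have hnat : ∀ t, (P t).natDegree = m := fun t => natDegree_eq_of_degree_eq_some (hdeg t)
  have hc₀ : 0 < ‖(P t₀).coeff m‖ := by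
    rw [norm_pos_iff, ← hnat t₀]
    exact leadingCoeff_ne_zero.mpr (ne_zero_of_coe_le_degree (hdeg t₀).ge)
  have hlc : ∀ᶠ t in 𝓝 t₀, ‖(P t₀).coeff m‖ / 2 < ‖(P t).coeff m‖ :=
    (hcont m).norm.continuousAt.eventually (lt_mem_nhds (half_lt_self hc₀))
  have heval : ∀ᶠ t in 𝓝 t₀, ‖(P t).eval a‖ < ‖(P t₀).coeff m‖ / 2 * ε ^ m := by
    have hcont_a : Continuous fun t => (P t).eval a :=
      (continuous_eval_of_continuous_coeff (fun t => (hnat t).le) hcont).comp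
        (continuous_id.prodMk continuous_const)
    have h0 : (P t₀).eval a = 0 := isRoot_of_mem_roots ha
    refine hcont_a.norm.continuousAt.eventually (gt_mem_nhds ?_)
    simp only [h0, norm_zero]
    positivity
  filter_upwards [hlc, heval] with t hlc heval
  by_contra! hfar
  have hfar' : ∀ z ∈ (P t).roots, ε ≤ ‖a - z‖ := fun z hz => by
    by_contra! hlt
    exact hfar z hz (hball (by rwa [Metric.mem_ball, dist_comm, dist_eq_norm]))
  have hle := norm_leadingCoeff_mul_pow_le_norm_eval hε.le hfar'
  rw [leadingCoeff, hnat t] at hle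
  have : ‖(P t₀).coeff m‖ / 2 * ε ^ m < ‖(P t).coeff m‖ * ε ^ m := by gcongr
  linarith

theorem isClosed_setOf_exists_root_mem (hdeg : ∀ t, (P t).degree = m)
    (hcont : ∀ i, Continuous fun t => (P t).coeff i) {F : Set ℂ} (hF : IsClosed F) :
    IsClosed {t | ∃ z ∈ (P t).roots, z ∈ F} := by
  refine isClosed_iff_frequently.mpr fun t₀ hfreq => ?_
  by_contra hnot
  obtain ⟨r, hr⟩ := exists_eventually_roots_norm_le hdeg hcont t₀
  have hK : IsCompact (F ∩ Metric.closedBall 0 r) := (isCompact_closedBall 0 r).inter_left hF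
  have hev : ∀ᶠ t in 𝓝 t₀, ∀ z ∈ F ∩ Metric.closedBall 0 r, (P t).eval z ≠ 0 := by
    refine hK.eventually_forall_of_forall_eventually fun z hz => ?_
    have hz₀ : (P t₀).eval z ≠ 0 := fun h =>
      hnot ⟨z, (mem_roots (ne_zero_of_coe_le_degree (hdeg t₀).ge)).mpr h, hz.1⟩
    have heval := continuous_eval_of_continuous_coeff
      (fun t => (natDegree_eq_of_degree_eq_some (hdeg t)).le) hcont
    exact heval.continuousAt.eventually_ne hz₀
  obtain ⟨t, ⟨z, hz, hzF⟩, hev, hr⟩ := (hfreq.and_eventually (hev.and hr)).exists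
  exact hev z ⟨hzF, by simpa using hr z hz⟩ (isRoot_of_mem_roots hz)

theorem forall_roots_neg_of_preconnectedSpace [PreconnectedSpace T]
    (hdeg : ∀ t, (P t).degree = m) (hcont : ∀ i, Continuous fun t => (P t).coeff i)
    {f : ℂ → ℝ} (hf : Continuous f) (hne : ∀ t, ∀ z ∈ (P t).roots, f z ≠ 0) {t₀ : T}
    (h₀ : ∀ z ∈ (P t₀).roots, f z < 0) (t₁ : T) : ∀ z ∈ (P t₁).roots, f z < 0 := by
  set G := {t | ∃ z ∈ (P t).roots, z ∈ {w | 0 ≤ f w}}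
  have hG : G = {t | ∃ z ∈ (P t).roots, z ∈ {w | 0 < f w}} := by
    ext t
    exact exists_congr fun z => and_congr_right fun hz => (hne t z hz).symm.le_iff_lt
  have hclopen : IsClopen G :=
    ⟨isClosed_setOf_exists_root_mem hdeg hcont (isClosed_le continuous_const hf),
      hG ▸ isOpen_setOf_exists_root_mem hdeg hcont (isOpen_lt continuous_const hf)⟩
  have ht₀ : t₀ ∉ G := fun ⟨z, hz, h⟩ => (h₀ z hz).not_ge h
  rcases isClopen_iff.mp hclopen with h | h
  · intro z hz
    by_contra! hz'
    have ht₁ : t₁ ∈ G := ⟨z, hz, hz'⟩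
    rw [h] at ht₁
    exact ht₁
  · exact absurd (h ▸ Set.mem_univ t₀) ht₀

end RootContinuity

theorem mul_im_neg_of_mem_roots_esymmLine (hm : 1 ≤ m) {d : Fin n → ℝ}
    (hd : d ∈ gardingCone n m) (u : Fin n → ℝ) {τ : ℝ} (hτ : τ ≠ 0) {z : ℂ}
    (hz : z ∈ (esymmLine m (fun i => (u i : ℂ) + τ * Complex.I) fun i => (d i : ℂ)).roots) :
    τ * z.im < 0 := by
  have hmn : m ≤ n := le_of_esymm_ne_zero (hd m hm le_rfl).ne'
  set D : unitInterval → Fin n → ℝ := fun θ => (θ : ℝ) • d + (1 - (θ : ℝ)) • 1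
  have hD : ∀ θ, D θ ∈ gardingCone n m := fun θ => smul_add_sub_smul_one_mem_gardingCone hd θ.2
  set P : unitInterval → ℂ[X] := fun θ =>
    esymmLine m (fun i => (u i : ℂ) + τ * Complex.I) fun i => (D θ i : ℂ)
  have hdeg : ∀ θ, (P θ).degree = m := fun θ => degree_esymmLine_ofReal _ (hD θ m hm le_rfl).ne'
  have hcont : ∀ j, Continuous fun θ => (P θ).coeff j :=
    continuous_coeff_esymmLine continuous_const (by fun_prop)
  -- A real root `r` would give `S_m(v + iτe) = 0` for the real vector `v = u + r • D θ`.
  have hne : ∀ θ, ∀ w ∈ (P θ).roots, τ * w.im ≠ 0 := by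
    intro θ w hw h
    obtain ⟨r, rfl⟩ : ∃ r : ℝ, w = r :=
      ⟨w.re, Complex.ext rfl (by simp [(mul_eq_zero.mp h).resolve_left hτ])⟩
    have hshift :
        (esymmLine m (fun i => ((u + r • D θ) i : ℂ)) 1).eval (τ * Complex.I) = 0 := by
      rw [← isRoot_of_mem_roots hw]
      refine eval_esymmLine_congr fun i => ?_
      simp only [Pi.add_apply, Pi.smul_apply, Pi.one_apply, smul_eq_mul]
      push_cast
      ring
    simpa [hτ] using im_eq_zero_of_eval_esymmLine_one hmn _ hshift
  have h₀ : ∀ w ∈ (P 0).roots, τ * w.im < 0 := by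
    intro w hw
    have hshift : (esymmLine m (fun i => (u i : ℂ)) 1).eval (w + τ * Complex.I) = 0 := by
      rw [← isRoot_of_mem_roots hw]
      exact eval_esymmLine_congr fun i => by simp [D]; ring
    have him : w.im = -τ := by
      simpa [add_eq_zero_iff_eq_neg] using im_eq_zero_of_eval_esymmLine_one hmn u hshift
    rw [him, mul_neg]
    exact neg_neg_iff_pos.mpr (mul_self_pos.mpr hτ)
  have hP₁ : P 1 = esymmLine m (fun i => (u i : ℂ) + τ * Complex.I) fun i => (d i : ℂ) := by
    simp [P, D]
  exact forall_roots_neg_of_preconnectedSpace hdeg hcont (by fun_prop) hne h₀ 1 z (hP₁ ▸ hz)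

theorem im_eq_zero_of_mem_roots_esymmLine (hm : 1 ≤ m) {d : Fin n → ℝ}
    (hd : d ∈ gardingCone n m) (u : Fin n → ℝ) {z : ℂ}
    (hz : z ∈ (esymmLine m (fun i => (u i : ℂ)) fun i => (d i : ℂ)).roots) : z.im = 0 := by
  by_contra hz₀
  set Q : ℝ → ℂ[X] := fun τ =>
    esymmLine m (fun i => (u i : ℂ) + τ * Complex.I) fun i => (d i : ℂ)
  have hdeg : ∀ τ, (Q τ).degree = m := fun τ => degree_esymmLine_ofReal _ (hd m hm le_rfl).ne'
  have hcont : ∀ j, Continuous fun τ => (Q τ).coeff j :=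
    continuous_coeff_esymmLine (by fun_prop) continuous_const
  -- The root `z` survives the shift by `iτe` for small `τ` of the sign of `z.im`, which
  -- `mul_im_neg_of_mem_roots_esymmLine` forbids.
  set O := {τ | ∃ w ∈ (Q τ).roots, w ∈ {w : ℂ | 0 < w.im * z.im}}
  have hO : IsOpen O :=
    isOpen_setOf_exists_root_mem hdeg hcont (isOpen_lt continuous_const (by fun_prop))
  have h0 : (0 : ℝ) ∈ O := ⟨z, by simpa [Q] using hz, mul_self_pos.mpr hz₀⟩
  have hev : ∀ᶠ δ in 𝓝[>] (0 : ℝ), δ * z.im ∈ O :=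
    (((continuous_id.mul continuous_const).tendsto' 0 0 (zero_mul _)).eventually
      (hO.mem_nhds h0)).filter_mono nhdsWithin_le_nhds
  obtain ⟨δ, ⟨w, hw, hwz⟩, hδ⟩ := (hev.and self_mem_nhdsWithin).exists
  have hneg := mul_im_neg_of_mem_roots_esymmLine hm hd u (mul_ne_zero (ne_of_gt hδ) hz₀) hw
  have hpos : 0 < δ * (w.im * z.im) := mul_pos hδ hwz
  linarith

theorem re_neg_of_mem_roots_esymmLine (hm : 1 ≤ m) {x y : Fin n → ℝ}
    (hx : x ∈ gardingCone n m) (hy : y ∈ gardingCone n m) {z : ℂ}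
    (hz : z ∈ (esymmLine m (fun i => (y i : ℂ)) fun i => (x i : ℂ)).roots) : z.re < 0 := by
  have hmn : m ≤ n := le_of_esymm_ne_zero (hx m hm le_rfl).ne'
  set Y : unitInterval → Fin n → ℝ := fun θ => (θ : ℝ) • y + (1 - (θ : ℝ)) • 1
  have hY : ∀ θ, Y θ ∈ gardingCone n m := fun θ => smul_add_sub_smul_one_mem_gardingCone hy θ.2
  set P : unitInterval → ℂ[X] := fun θ => esymmLine m (fun i => (Y θ i : ℂ)) fun i => (x i : ℂ)
  have hdeg : ∀ θ, (P θ).degree = m := fun θ => degree_esymmLine_ofReal _ (hx m hm le_rfl).ne'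
  have hcont : ∀ j, Continuous fun θ => (P θ).coeff j :=
    continuous_coeff_esymmLine (by fun_prop) continuous_const
  have hreal : ∀ θ, ∀ w ∈ (P θ).roots, ∃ r : ℝ, w = r ∧ esymm n m (Y θ + r • x) = 0 := by
    intro θ w hw
    obtain ⟨r, rfl⟩ : ∃ r : ℝ, w = r :=
      ⟨w.re, Complex.ext rfl (by simp [im_eq_zero_of_mem_roots_esymmLine hm hx _ hw])⟩
    have h := isRoot_of_mem_roots hw
    rw [IsRoot, eval_esymmLine_ofReal, eval_esymmLine_real, Complex.ofReal_eq_zero] at h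
    exact ⟨r, rfl, h⟩
  have hne : ∀ θ, ∀ w ∈ (P θ).roots, w.re ≠ 0 := by
    intro θ w hw h
    obtain ⟨r, rfl, hr⟩ := hreal θ w hw
    simp only [Complex.ofReal_re] at h
    rw [h, zero_smul, add_zero] at hr
    exact (hY θ m hm le_rfl).ne' hr
  have h₀ : ∀ w ∈ (P 0).roots, w.re < 0 := by
    intro w hw
    obtain ⟨r, rfl, hr⟩ := hreal 0 w hw
    by_contra! hr₀
    simp only [Complex.ofReal_re] at hr₀
    refine (esymm_add_smul_one_pos hmn (u := r • x) (fun j hj hjm => ?_) one_pos).ne' ?_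
    · rw [esymm_smul]
      exact mul_nonneg (pow_nonneg hr₀ j) (hx j hj hjm).le
    · rw [← hr]
      congr 1
      ext i
      simp [Y, add_comm]
  have hP₁ : P 1 = esymmLine m (fun i => (y i : ℂ)) fun i => (x i : ℂ) := by
    simp [P, Y]
  exact forall_roots_neg_of_preconnectedSpace hdeg hcont Complex.continuous_re hne h₀ 1 z
    (hP₁ ▸ hz)

theorem esymm_add_pos (hm : 1 ≤ m) {x y : Fin n → ℝ} (hx : x ∈ gardingCone n m)
    (hy : y ∈ gardingCone n m) : 0 < esymm n m (x + y) := by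
  set g : ℝ → ℝ := fun s => (esymmLine m y x).eval s
  have hg : ∀ s, 0 ≤ s → g s ≠ 0 := by
    intro s hs h
    have hroot : (s : ℂ) ∈ (esymmLine m (fun i => (y i : ℂ)) fun i => (x i : ℂ)).roots := by
      have hne : (esymmLine m (fun i => (y i : ℂ)) fun i => (x i : ℂ)) ≠ 0 :=
        ne_zero_of_coe_le_degree (degree_esymmLine_ofReal _ (hx m hm le_rfl).ne').ge
      rw [mem_roots hne, IsRoot, eval_esymmLine_ofReal]
      exact_mod_cast h
    exact (re_neg_of_mem_roots_esymmLine hm hx hy hroot).not_ge (by simpa using hs)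
  have h0 : 0 < g 0 := by simpa [g, eval_esymmLine_real] using hy m hm le_rfl
  have h1 : 0 < g 1 := by
    by_contra! h1
    obtain ⟨s, hs, hgs⟩ :=
      intermediate_value_Icc' zero_le_one (esymmLine m y x).continuous.continuousOn ⟨h1, h0.le⟩
    exact hg s hs.1 hgs
  simpa [g, eval_esymmLine_real, add_comm] using h1

theorem gardingCone_subset_of_le {j r : ℕ} (h : j ≤ r) : gardingCone n r ⊆ gardingCone n j :=
  fun _ hx l hl hlj => hx l hl (hlj.trans h)

def gardingConvexCone (n r : ℕ) : ConvexCone ℝ (Fin n → ℝ) where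
  carrier := gardingCone n r
  smul_mem' c hc x hx j hj hjr := by
    rw [esymm_smul]
    exact mul_pos (pow_pos hc j) (hx j hj hjr)
  add_mem' x hx y hy j hj hjr :=
    esymm_add_pos hj (gardingCone_subset_of_le hjr hx) (gardingCone_subset_of_le hjr hy)

end GardingCone

theorem gardingCone_convex_general (n r : ℕ) :
    ∀ x ∈ gardingCone n r, ∀ y ∈ gardingCone n r, ∀ t : ℝ, t ∈ Set.Icc (0 : ℝ) 1 →
      t • x + (1 - t) • y ∈ gardingCone n r :=
  fun _ hx _ hy t ht =>
    (GardingCone.gardingConvexCone n r).convex hx hy ht.1 (sub_nonneg.mpr ht.2) (add_sub_cancel t 1)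

/-- For every `n ≥ 1` and `1 ≤ r ≤ n`, the Gårding cone `Γ_r` is convex:
if `λ, μ ∈ Γ_r` and `t ∈ [0,1]`, then `tλ + (1−t)μ ∈ Γ_r`. -/
theorem gardingCone_convex (n r : ℕ) (hn : 1 ≤ n) (hr1 : 1 ≤ r) (hrn : r ≤ n) :
    ∀ x ∈ gardingCone n r, ∀ y ∈ gardingCone n r, ∀ t : ℝ, t ∈ Set.Icc (0 : ℝ) 1 →
      t • x + (1 - t) • y ∈ gardingCone n r :=
  gardingCone_convex_general n r
end

section
/- Let n ≥ 2 and 1 ≤ r ≤ n. For every λ ∈ Γ_r and every index i ∈ {1,…,n}, the partial derivative of S_r with respect to λ_i is strictly positive at λ; equivalently, S_{r−1}((λ_j)_{j ≠ i}) > 0, where S_{r−1} is the (r−1)-st elementary symmetric function of the n−1 remaining entries (with the convention S_0 = 1). In particular, S_r is strictly increasing in each variable on Γ_r. -/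
/-!
Write `S_k(s)` for the elementary symmetric functions of a multiset `s` and expand along one
element: `S_{k+1}(a ::ₘ s) = S_{k+1}(s) + a S_k(s)`. Hence `∂S_r/∂λ_i = S_{r-1}(λ without λ_i)`,
and everything reduces to: `a ::ₘ s ∈ Γ_{k+1}` implies `s ∈ Γ_k`.

This is proved by strong induction on `s`, jointly with Newton's inequality
`S_{k+2} S_k ≤ S_{k+1}²` on `Γ_{k+2}`. If all entries of `s` are positive there is nothing to
prove. Otherwise, removing a non-positive entry `m` keeps the cone (each `S_j` can only grow),
and if `S_k(s)` were not positive, the expansion of `S_{k+1}(a ::ₘ s)` along `m` would violate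
Newton's inequality for `s` without `m`. Newton's inequality itself follows, after removing a
positive entry, from positivity and Newton's inequality for the smaller multiset, starting
from `2 S_2 ≤ S_1²`.
-/

namespace Multiset

variable {R : Type*}

section

variable [CommSemiring R]

@[simp]
lemma esymm_zero (s : Multiset R) : s.esymm 0 = 1 := by
  simp [esymm]

lemma esymm_one (s : Multiset R) : s.esymm 1 = s.sum := by
  simp [esymm, powersetCard_one, map_map]

lemma esymm_cons_succ (a : R) (s : Multiset R) (k : ℕ) :
    (a ::ₘ s).esymm (k + 1) = s.esymm (k + 1) + a * s.esymm k := by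
  simp [esymm, map_map, sum_map_mul_left]

lemma esymm_eq_zero_of_card_lt {s : Multiset R} {k : ℕ} (h : card s < k) : s.esymm k = 0 := by
  simp [esymm, powersetCard_eq_empty _ h]

variable [PartialOrder R]

def InGardingCone (k : ℕ) (s : Multiset R) : Prop :=
  ∀ j ≤ k, 0 < s.esymm j

variable {s : Multiset R} {j k : ℕ}

lemma inGardingCone_succ :
    s.InGardingCone (k + 1) ↔ s.InGardingCone k ∧ 0 < s.esymm (k + 1) := by
  refine ⟨fun h ↦ ⟨fun j hj ↦ h j (by omega), h (k + 1) le_rfl⟩, fun ⟨hk, hk1⟩ j hj ↦ ?_⟩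
  rcases Nat.le_succ_iff.1 hj with hj | rfl
  exacts [hk j hj, hk1]

lemma InGardingCone.mono (h : s.InGardingCone k) (hjk : j ≤ k) : s.InGardingCone j :=
  fun i hi ↦ h i (hi.trans hjk)

lemma InGardingCone.le_card (h : s.InGardingCone k) : k ≤ card s := by
  by_contra! hk
  simpa [esymm_eq_zero_of_card_lt hk] using h k le_rfl

end

variable [CommRing R] [LinearOrder R] [IsStrictOrderedRing R]

lemma esymm_pos_of_forall_pos {s : Multiset R} {k : ℕ} (hs : ∀ a ∈ s, 0 < a)
    (hk : k ≤ card s) : 0 < s.esymm k := by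
  have hne : s.powersetCard k ≠ 0 := by
    rw [← card_pos, card_powersetCard]; exact Nat.choose_pos hk
  simpa [esymm] using sum_lt_sum_of_nonempty (f := fun _ ↦ (0 : R)) (g := prod) hne
    fun t ht ↦ prod_pos fun a ha ↦ hs a (mem_of_le (mem_powersetCard.1 ht).1 ha)

lemma two_mul_esymm_two_le_sq (s : Multiset R) : 2 * s.esymm 2 ≤ s.esymm 1 ^ 2 := by
  induction s using Multiset.induction_on with
  | empty => rw [esymm_eq_zero_of_card_lt (by simp), mul_zero]; positivity
  | cons a s ih =>
    rw [esymm_cons_succ a s 1, esymm_cons_succ a s 0, esymm_zero]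
    nlinarith [sq_nonneg a]

variable {s B : Multiset R} {a m : R} {k : ℕ}

lemma InGardingCone.of_cons_of_nonpos (ha : a ≤ 0) (h : (a ::ₘ s).InGardingCone k) :
    s.InGardingCone k := by
  induction k with
  | zero => intro j hj; simp [Nat.le_zero.1 hj]
  | succ k ih =>
    obtain ⟨hk, hk1⟩ := inGardingCone_succ.1 h
    have hs := ih hk
    rw [esymm_cons_succ] at hk1
    exact inGardingCone_succ.2 ⟨hs, by nlinarith [hs k le_rfl]⟩

def GardingConeRestricts (s : Multiset R) : Prop :=
  ∀ a k, (a ::ₘ s).InGardingCone (k + 1) → s.InGardingCone k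

def NewtonInGardingCone (s : Multiset R) : Prop :=
  ∀ k, s.InGardingCone (k + 2) → s.esymm (k + 2) * s.esymm k ≤ s.esymm (k + 1) ^ 2

lemma esymm_cons_pos_of_nonpos (hm : m ≤ 0) (hB : GardingConeRestricts B)
    (hN : NewtonInGardingCone B) (h : (a ::ₘ m ::ₘ B).InGardingCone (k + 1)) :
    0 < (m ::ₘ B).esymm k := by
  rw [cons_swap] at h
  have haB : (a ::ₘ B).InGardingCone (k + 1) := h.of_cons_of_nonpos hm
  rcases k with _ | k
  · simp
  have hB' : B.InGardingCone (k + 1) := hB a (k + 1) haB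
  have hb0 : 0 < B.esymm k := hB' k (by omega)
  have hc : 0 < B.esymm (k + 1) + a * B.esymm k := by
    simpa only [esymm_cons_succ] using haB (k + 1) (by omega)
  have hS : 0 < B.esymm (k + 2) + a * B.esymm (k + 1)
      + m * (B.esymm (k + 1) + a * B.esymm k) := by
    simpa only [esymm_cons_succ] using h (k + 2) le_rfl
  rw [esymm_cons_succ]
  by_contra! hneg
  -- `m ≤ -S_{k+1}(B) / S_k(B)`; substituting this bound into `hS` gives `hlt`.
  have hlt : B.esymm (k + 1) ^ 2 < B.esymm (k + 2) * B.esymm k := by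
    nlinarith [mul_nonneg (neg_nonneg.2 hneg) hc.le, mul_pos hS hb0]
  have hb2 : 0 < B.esymm (k + 2) := by nlinarith [sq_nonneg (B.esymm (k + 1))]
  exact hlt.not_ge (hN k (inGardingCone_succ.2 ⟨hB', hb2⟩))

lemma gardingConeRestricts_of_forall_lt
    (ih : ∀ t < s, GardingConeRestricts t ∧ NewtonInGardingCone t) :
    GardingConeRestricts s := by
  intro a k h j hj
  have hj' := h.mono (Nat.succ_le_succ hj)
  by_cases hpos : ∀ b ∈ s, 0 < b
  · exact esymm_pos_of_forall_pos hpos (by simpa using hj'.le_card)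
  obtain ⟨m, hm, hm0⟩ : ∃ m ∈ s, m ≤ 0 := by simpa using hpos
  obtain ⟨B, rfl⟩ := exists_cons_of_mem hm
  obtain ⟨hB, hN⟩ := ih B (lt_cons_self B m)
  exact esymm_cons_pos_of_nonpos hm0 hB hN hj'

lemma esymm_mul_esymm_le_sq_cons_of_pos (ha : 0 < a) (hB : GardingConeRestricts B)
    (hN : NewtonInGardingCone B) (h : (a ::ₘ B).InGardingCone (k + 3)) :
    (a ::ₘ B).esymm (k + 3) * (a ::ₘ B).esymm (k + 1) ≤ (a ::ₘ B).esymm (k + 2) ^ 2 := by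
  have hB' : B.InGardingCone (k + 2) := hB a (k + 2) h
  have hd0 : 0 < B.esymm k := hB' k (by omega)
  have hd1 : 0 < B.esymm (k + 1) := hB' (k + 1) (by omega)
  have hd2 : 0 < B.esymm (k + 2) := hB' (k + 2) le_rfl
  have h20 : B.esymm (k + 2) * B.esymm k ≤ B.esymm (k + 1) ^ 2 := hN k hB'
  have h31 : B.esymm (k + 3) * B.esymm (k + 1) ≤ B.esymm (k + 2) ^ 2 := by
    by_cases hd3 : 0 < B.esymm (k + 3)
    · exact hN (k + 1) (inGardingCone_succ.2 ⟨hB', hd3⟩)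
    · nlinarith
  have h30 : B.esymm (k + 3) * B.esymm k ≤ B.esymm (k + 2) * B.esymm (k + 1) := by
    refine le_of_mul_le_mul_right ?_ (mul_pos hd1 hd2)
    nlinarith [mul_le_mul h31 h20 (by positivity) (by positivity)]
  simp only [esymm_cons_succ]
  nlinarith [mul_le_mul_of_nonneg_left h30 ha.le, mul_le_mul_of_nonneg_left h20 (sq_nonneg a)]

lemma newtonInGardingCone_of_forall_lt
    (ih : ∀ t < s, GardingConeRestricts t ∧ NewtonInGardingCone t) :
    NewtonInGardingCone s := by
  rintro (_ | k) h
  · have h2 : 0 < s.esymm 2 := h 2 le_rfl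
    simpa using (le_mul_of_one_le_left h2.le one_le_two).trans (two_mul_esymm_two_le_sq s)
  obtain ⟨a, ha, ha0⟩ : ∃ a ∈ s, 0 < a := by
    by_contra! hs
    have h1 : 0 < s.esymm 1 := h 1 (by omega)
    exact h1.not_ge (by simpa [esymm_one] using sum_le_card_nsmul s 0 hs)
  obtain ⟨B, rfl⟩ := exists_cons_of_mem ha
  obtain ⟨hB, hN⟩ := ih B (lt_cons_self B a)
  exact esymm_mul_esymm_le_sq_cons_of_pos ha0 hB hN h

theorem gardingConeRestricts_and_newtonInGardingCone (s : Multiset R) :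
    GardingConeRestricts s ∧ NewtonInGardingCone s := by
  induction s using Multiset.strongInductionOn with
  | ih s ih => exact ⟨gardingConeRestricts_of_forall_lt ih, newtonInGardingCone_of_forall_lt ih⟩

lemma InGardingCone.of_cons (h : (a ::ₘ s).InGardingCone (k + 1)) : s.InGardingCone k :=
  (gardingConeRestricts_and_newtonInGardingCone s).1 a k h

end Multiset

open Finset Function

lemma HasFDerivAt.hasDerivAt_update {𝕜 ι F : Type*} [NontriviallyNormedField 𝕜] [Fintype ι]
    [DecidableEq ι] [NormedAddCommGroup F] [NormedSpace 𝕜 F] {f : (ι → 𝕜) → F}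
    {f' : (ι → 𝕜) →L[𝕜] F} {x : ι → 𝕜} (hf : HasFDerivAt f f' x) (i : ι) :
    HasDerivAt (fun t ↦ f (update x i t)) (f' (Pi.single i 1)) (x i) := by
  rw [← update_eq_self i x] at hf
  exact hf.comp_hasDerivAt (x i) (_root_.hasDerivAt_update x i (x i))

lemma Finset.univ_val_map_update {ι R : Type*} [Fintype ι] [DecidableEq ι] (x : ι → R) (i : ι)
    (t : R) : univ.val.map (update x i t) = t ::ₘ (univ.erase i).val.map x := by
  rw [← Multiset.cons_erase (mem_univ_val i), Multiset.map_cons, update_self, ← erase_val]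
  exact congrArg _ (Multiset.map_congr rfl fun j hj ↦ update_of_ne (ne_of_mem_erase hj) t x)

lemma esymm_eq_esymm_map_univ (n r : ℕ) (x : Fin n → ℝ) :
    esymm n r x = (univ.val.map x).esymm r :=
  (esymm_map_val x univ r).symm

lemma differentiable_esymm (n r : ℕ) : Differentiable ℝ (esymm n r) := by
  unfold esymm
  fun_prop

lemma inGardingCone_of_mem_gardingCone {n r : ℕ} {x : Fin n → ℝ} (hx : x ∈ gardingCone n r) :
    (univ.val.map x).InGardingCone r := by
  rintro (_ | j) hj
  · simp
  · simpa [esymm_eq_esymm_map_univ] using hx (j + 1) (by omega) hj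

theorem esymm_partialDeriv_pos_general (n r : ℕ) (hr1 : 1 ≤ r)
    (x : Fin n → ℝ) (hx : x ∈ gardingCone n r) (i : Fin n) :
    0 < fderiv ℝ (esymm n r) x (Pi.single i 1) ∧
    0 < ∑ s ∈ Finset.powersetCard (r - 1) (Finset.univ.erase i), ∏ j ∈ s, x j ∧
    fderiv ℝ (esymm n r) x (Pi.single i 1) =
      ∑ s ∈ Finset.powersetCard (r - 1) (Finset.univ.erase i), ∏ j ∈ s, x j ∧
    StrictMono (fun t : ℝ => esymm n r (Function.update x i t)) := by
  obtain ⟨r, rfl⟩ : ∃ r', r = r' + 1 := ⟨r - 1, by omega⟩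
  set S := (univ.erase i).val.map x
  have hline (t : ℝ) : esymm n (r + 1) (update x i t) = S.esymm (r + 1) + t * S.esymm r := by
    rw [esymm_eq_esymm_map_univ, univ_val_map_update, Multiset.esymm_cons_succ]
  have hpos : 0 < S.esymm r := by
    have hcone := inGardingCone_of_mem_gardingCone hx
    rw [← update_eq_self i x, univ_val_map_update] at hcone
    exact hcone.of_cons r le_rfl
  have hderiv : fderiv ℝ (esymm n (r + 1)) x (Pi.single i 1) = S.esymm r := by
    refine ((differentiable_esymm n (r + 1) x).hasFDerivAt.hasDerivAt_update i).unique ?_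
    simpa only [hline, one_mul] using
      ((hasDerivAt_id' (x i)).mul_const (S.esymm r)).const_add (S.esymm (r + 1))
  rw [Nat.add_sub_cancel, ← esymm_map_val, hderiv]
  refine ⟨hpos, hpos, rfl, fun a b hab ↦ ?_⟩
  simp only [hline]
  gcongr

/-- Let `n ≥ 2` and `1 ≤ r ≤ n`.  For every `λ ∈ Γ_r` and every index `i`, the partial
derivative of `S_r` with respect to `λ_i` is strictly positive at `λ`; equivalently
`S_{r−1}((λ_j)_{j ≠ i}) > 0`, the `(r−1)`-st elementary symmetric function of the `n−1`
remaining entries (with the convention `S_0 = 1`).  In particular `S_r` is strictly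
increasing in the `i`-th variable on `Γ_r`. -/
theorem esymm_partialDeriv_pos (n r : ℕ) (hn : 2 ≤ n) (hr1 : 1 ≤ r) (hrn : r ≤ n)
    (x : Fin n → ℝ) (hx : x ∈ gardingCone n r) (i : Fin n) :
    0 < fderiv ℝ (esymm n r) x (Pi.single i 1) ∧
    0 < ∑ s ∈ Finset.powersetCard (r - 1) (Finset.univ.erase i), ∏ j ∈ s, x j ∧
    fderiv ℝ (esymm n r) x (Pi.single i 1) =
      ∑ s ∈ Finset.powersetCard (r - 1) (Finset.univ.erase i), ∏ j ∈ s, x j ∧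
    StrictMono (fun t : ℝ => esymm n r (Function.update x i t)) :=
  esymm_partialDeriv_pos_general n r hr1 x hx i
end

section
/- Let n ≥ 1 and 1 ≤ r ≤ n. If λ lies in the topological boundary of the Gårding cone Γ_r in ℝⁿ, then S_r(λ) = 0. -/
/-!
A frontier point `x` of the open cone `Γ_r` lies in its closure, so `S_j(x) ≥ 0` for `j ≤ r`;
suppose `S_r(x) > 0`. The coefficient of `t^(n-k)` in `P(t) = ∏ (t + x_i)` is `S_k(x)`, so the
`(n-r)`-th derivative `D` of `P` has degree `r` and the coefficient of `t^(r-k)` in `D` is a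
positive multiple of `S_k(x)`. By Rolle's theorem `D` has only real roots, and since its
coefficients are nonnegative with positive constant term, all of them are negative. Hence `D` is a
positive multiple of `∏ (t + μ_i)` with `μ_i > 0`, all of its coefficients are positive, and
`x ∈ Γ_r`: impossible for a frontier point of an open set.
-/

open Polynomial

theorem Multiset.esymm_pos {R : Type*} [CommSemiring R] [PartialOrder R] [IsStrictOrderedRing R]
    {s : Multiset R} (hs : ∀ a ∈ s, 0 < a) {k : ℕ} (hk : k ≤ card s) : 0 < s.esymm k := by
  have hne : s.powersetCard k ≠ 0 := by
    rw [← Multiset.card_pos, Multiset.card_powersetCard]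
    exact Nat.choose_pos hk
  have hprod : ∀ t ∈ s.powersetCard k, 0 < t.prod := fun t ht =>
    Multiset.prod_pos fun a ha => hs a (Multiset.mem_of_le (Multiset.mem_powersetCard.1 ht).1 ha)
  simpa [Multiset.esymm] using
    Multiset.sum_lt_sum_of_nonempty hne (f := fun _ => (0 : R)) (g := Multiset.prod) hprod

theorem Polynomial.Splits.derivative_real {p : ℝ[X]} (hp : p.Splits) : (derivative p).Splits := by
  rw [splits_iff_card_roots] at hp ⊢
  have := card_roots_le_derivative p
  have := natDegree_derivative_le p
  have := card_roots' (derivative p)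
  omega

theorem Polynomial.Splits.iterate_derivative_real {p : ℝ[X]} (hp : p.Splits) (m : ℕ) :
    (derivative^[m] p).Splits := by
  induction m with
  | zero => exact hp
  | succ m ih => rw [Function.iterate_succ_apply']; exact ih.derivative_real

theorem Polynomial.eval_pos_of_coeff_nonneg {R : Type*} [CommSemiring R] [PartialOrder R]
    [IsStrictOrderedRing R] {p : R[X]} (hp : ∀ k, 0 ≤ p.coeff k) (hp0 : 0 < p.coeff 0)
    {t : R} (ht : 0 ≤ t) : 0 < p.eval t := by
  rw [eval_eq_sum_range]
  calc 0 < p.coeff 0 * t ^ 0 := by simpa using hp0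
    _ ≤ _ := Finset.single_le_sum (f := fun i => p.coeff i * t ^ i)
      (fun i _ => mul_nonneg (hp i) (pow_nonneg ht i)) (by simp)

theorem Polynomial.coeff_pos_of_splits_of_roots_neg {K : Type*} [Field K] [LinearOrder K]
    [IsStrictOrderedRing K] {p : K[X]} (hp : p.Splits) (hlc : 0 < p.leadingCoeff)
    (hroots : ∀ a ∈ p.roots, a < 0) {k : ℕ} (hk : k ≤ p.natDegree) : 0 < p.coeff k := by
  rw [coeff_eq_esymm_roots_of_splits hp hk, mul_assoc, ← Multiset.esymm_neg]
  refine mul_pos hlc (Multiset.esymm_pos ?_ ?_)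
  · intro a ha
    obtain ⟨b, hb, rfl⟩ := Multiset.mem_map.1 ha
    exact neg_pos.2 (hroots b hb)
  · rw [Multiset.card_map, hp.natDegree_eq_card_roots]; omega

theorem Polynomial.coeff_pos_of_splits_of_coeff_nonneg {K : Type*} [Field K] [LinearOrder K]
    [IsStrictOrderedRing K] {p : K[X]} (hp : p.Splits) (hcoeff : ∀ k, 0 ≤ p.coeff k)
    (hp0 : 0 < p.coeff 0) {k : ℕ} (hk : k ≤ p.natDegree) : 0 < p.coeff k := by
  have hp_ne : p ≠ 0 := by rintro rfl; simp at hp0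
  have hlc : 0 < p.leadingCoeff := (hcoeff _).lt_of_ne' (leadingCoeff_ne_zero.2 hp_ne)
  refine coeff_pos_of_splits_of_roots_neg hp hlc (fun a ha => ?_) hk
  by_contra! h
  exact (eval_pos_of_coeff_nonneg hcoeff hp0 h).ne' (isRoot_of_mem_roots ha)

theorem continuous_esymm (n r : ℕ) : Continuous (esymm n r) :=
  continuous_finsetSum _ fun _ _ => continuous_finsetProd _ fun i _ => continuous_apply i

theorem isOpen_gardingCone (n r : ℕ) : IsOpen (gardingCone n r) := by
  have : gardingCone n r = ⋂ j ∈ Finset.Icc 1 r, {x | 0 < esymm n j x} := by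
    ext x; simp [gardingCone, and_imp]
  rw [this]
  exact isOpen_biInter_finset fun j _ => isOpen_lt continuous_const (continuous_esymm n j)

theorem esymm_zero (n : ℕ) (x : Fin n → ℝ) : esymm n 0 x = 1 := by
  simp [esymm]

theorem esymm_eq_zero_of_lt {n r : ℕ} (h : n < r) (x : Fin n → ℝ) : esymm n r x = 0 := by
  rw [esymm, Finset.powersetCard_eq_empty.2 (by simpa using h), Finset.sum_empty]

theorem esymm_nonneg_of_mem_closure {n r j : ℕ} {x : Fin n → ℝ}
    (hx : x ∈ closure (gardingCone n r)) (hj : j ≤ r) : 0 ≤ esymm n j x := by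
  rcases Nat.eq_zero_or_pos j with rfl | hj0
  · simp [esymm_zero]
  · exact closure_minimal (fun y hy => (hy j hj0 hj).le)
      (isClosed_le continuous_const (continuous_esymm n j)) hx

theorem coeff_prod_X_add_C_eq_esymm {n k : ℕ} (x : Fin n → ℝ) (hk : k ≤ n) :
    (∏ i, (X + C (x i))).coeff (n - k) = esymm n k x := by
  rw [Finset.prod_X_add_C_coeff _ _ (by simp), esymm, Finset.card_univ, Fintype.card_fin,
    Nat.sub_sub_self hk]

theorem coeff_iterate_derivative_prod_X_add_C {n r k : ℕ} (x : Fin n → ℝ) (hk : k ≤ r)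
    (hr : r ≤ n) :
    (derivative^[n - r] (∏ i, (X + C (x i)))).coeff (r - k) =
      (n - k).descFactorial (n - r) * esymm n k x := by
  rw [coeff_iterate_derivative, show r - k + (n - r) = n - k by omega,
    coeff_prod_X_add_C_eq_esymm x (by omega), nsmul_eq_mul]

theorem natDegree_iterate_derivative_prod_X_add_C_le {n : ℕ} (x : Fin n → ℝ) (r : ℕ) :
    (derivative^[n - r] (∏ i, (X + C (x i)))).natDegree ≤ r := by
  have hP : (∏ i, (X + C (x i))).natDegree = n := by
    rw [natDegree_prod_of_monic _ _ fun i _ => monic_X_add_C (x i)]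
    simp
  have := natDegree_iterate_derivative (∏ i, (X + C (x i))) (n - r)
  omega

theorem mem_gardingCone_of_esymm_nonneg {n r : ℕ} {x : Fin n → ℝ}
    (h : ∀ j < r, 0 ≤ esymm n j x) (hr : 0 < esymm n r x) : x ∈ gardingCone n r := by
  have hrn : r ≤ n := not_lt.1 fun hnr => hr.ne' (esymm_eq_zero_of_lt hnr x)
  set D := derivative^[n - r] (∏ i, (X + C (x i)))
  have hD : ∀ {k}, k ≤ r → D.coeff (r - k) = (n - k).descFactorial (n - r) * esymm n k x :=
    fun hk => coeff_iterate_derivative_prod_X_add_C x hk hrn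
  have hdf : ∀ {k}, k ≤ r → (0 : ℝ) < (n - k).descFactorial (n - r) := fun hk => by
    exact_mod_cast Nat.descFactorial_pos.2 (by omega)
  have hdeg : D.natDegree ≤ r := natDegree_iterate_derivative_prod_X_add_C_le x r
  have hS : ∀ k ≤ r, 0 ≤ esymm n k x := fun k hk => hk.lt_or_eq.elim (h k) (· ▸ hr.le)
  have hDnonneg : ∀ m, 0 ≤ D.coeff m := by
    intro m
    rcases le_or_gt m r with hm | hm
    · obtain ⟨k, hk, rfl⟩ : ∃ k ≤ r, m = r - k :=
        ⟨r - m, Nat.sub_le r m, (Nat.sub_sub_self hm).symm⟩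
      rw [hD hk]
      exact mul_nonneg (hdf hk).le (hS k hk)
    · rw [coeff_eq_zero_of_natDegree_lt (hdeg.trans_lt hm)]
  have hD0 : 0 < D.coeff 0 := by
    have := hD (le_refl r)
    rw [Nat.sub_self] at this
    exact this ▸ mul_pos (hdf le_rfl) hr
  have hDr : D.coeff r ≠ 0 := by
    have := hD (Nat.zero_le r)
    rw [Nat.sub_zero, esymm_zero, mul_one] at this
    exact this ▸ (hdf (Nat.zero_le r)).ne'
  have hsplit : D.Splits :=
    (Splits.prod fun i _ => Splits.X_add_C (x i)).iterate_derivative_real (n - r)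
  intro k _ hk
  have hpos := coeff_pos_of_splits_of_coeff_nonneg hsplit hDnonneg hD0
    ((Nat.sub_le r k).trans (le_natDegree_of_ne_zero hDr))
  rw [hD hk] at hpos
  exact pos_of_mul_pos_right hpos (hdf hk).le

theorem esymm_eq_zero_on_frontier_general (n r : ℕ)
    (x : Fin n → ℝ) (hx : x ∈ frontier (gardingCone n r)) :
    esymm n r x = 0 := by
  rw [(isOpen_gardingCone n r).frontier_eq] at hx
  obtain ⟨hcl, hnot⟩ := hx
  refine le_antisymm (not_lt.1 fun hpos => hnot ?_) (esymm_nonneg_of_mem_closure hcl le_rfl)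
  exact mem_gardingCone_of_esymm_nonneg (fun j hj => esymm_nonneg_of_mem_closure hcl hj.le) hpos

/-- For `n ≥ 1` and `1 ≤ r ≤ n`: if `λ` lies in the topological boundary of the
Gårding cone `Γ_r` in `ℝⁿ`, then `S_r(λ) = 0`. -/
theorem esymm_eq_zero_on_frontier (n r : ℕ) (hn : 1 ≤ n) (hr1 : 1 ≤ r) (hrn : r ≤ n)
    (x : Fin n → ℝ) (hx : x ∈ frontier (gardingCone n r)) :
    esymm n r x = 0 :=
  esymm_eq_zero_on_frontier_general n r x hx
end

section
/- Let Ω ⊆ ℝⁿ be open, let Φ : Ω → ℝ be twice continuously differentiable and bounded on Ω, let A : Ω → (real symmetric positive semidefinite n×n matrices) be any map, and let M > 0. Suppose that at every x ∈ Ω, tr(A(x) · Hess Φ(x)) ≤ M (1 + |∇Φ(x)| + tr A(x) + ⟨A(x) ∇Φ(x), ∇Φ(x)⟩). Then for every a₀ ≥ M there exists a constant M' > 0, depending only on M, a₀ and sup_Ω |Φ|, such that the function Φ̃ = 1 − e^{−a₀ Φ} satisfies, at every x ∈ Ω, tr(A(x) · Hess Φ̃(x)) ≤ M' (1 + |∇Φ̃(x)|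 + tr A(x)). -/
/-- The `i`-th partial derivative of `f : ℝⁿ → ℝ` at `x`. -/
noncomputable def partialDeriv' {n : ℕ} (f : (Fin n → ℝ) → ℝ) (i : Fin n)
    (x : Fin n → ℝ) : ℝ :=
  fderiv ℝ f x (Pi.single i 1)

/-- The Hessian matrix of `f : ℝⁿ → ℝ` at `x`. -/
noncomputable def hessian {n : ℕ} (f : (Fin n → ℝ) → ℝ) (x : Fin n → ℝ) :
    Matrix (Fin n) (Fin n) ℝ :=
  Matrix.of fun i j => partialDeriv' (partialDeriv' f j) i x

/-- The Euclidean norm of the gradient of `f : ℝⁿ → ℝ` at `x`. -/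
noncomputable def gradNorm {n : ℕ} (f : (Fin n → ℝ) → ℝ) (x : Fin n → ℝ) : ℝ :=
  Real.sqrt (∑ i, (partialDeriv' f i x) ^ 2)

/-!
With `c = a₀ e^{-a₀Φ}` one has `∇Φ̃ = c ∇Φ` and `Hess Φ̃ = c (Hess Φ - a₀ ∇Φ ⊗ ∇Φ)`, hence
`tr(A Hess Φ̃) = c (tr(A Hess Φ) - a₀ ⟨A∇Φ, ∇Φ⟩)`. Since `a₀ ≥ M` and `A ≥ 0`, the hypothesis absorbs
the quadratic term and leaves `c M (1 + |∇Φ| + tr A) = M (c + |∇Φ̃| + c tr A)`, while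
`c ≤ a₀ e^{a₀B}` because `|Φ| ≤ B`.
-/

open Matrix

section

variable {n : ℕ}

noncomputable def grad (f : (Fin n → ℝ) → ℝ) (x : Fin n → ℝ) : Fin n → ℝ :=
  fun i => partialDeriv' f i x

theorem partialDeriv'_comp {Φ : (Fin n → ℝ) → ℝ} {h : ℝ → ℝ} {d : ℝ} {x : Fin n → ℝ}
    (hΦ : DifferentiableAt ℝ Φ x) (hh : HasDerivAt h d (Φ x)) (i : Fin n) :
    partialDeriv' (fun y => h (Φ y)) i x = d * partialDeriv' Φ i x := by
  rw [partialDeriv', show (fun y => h (Φ y)) = h ∘ Φ from rfl,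
    (hh.comp_hasFDerivAt x hΦ.hasFDerivAt).fderiv]
  simp [partialDeriv']

theorem ContDiffAt.differentiableAt_partialDeriv' {Φ : (Fin n → ℝ) → ℝ} {x : Fin n → ℝ}
    (hΦ : ContDiffAt ℝ 2 Φ x) (i : Fin n) : DifferentiableAt ℝ (partialDeriv' Φ i) x :=
  ((hΦ.fderiv_right (m := 1) (by norm_num)).differentiableAt one_ne_zero).clm_apply
    (differentiableAt_const _)

theorem hessian_comp {Φ : (Fin n → ℝ) → ℝ} {h h' : ℝ → ℝ} {d : ℝ} {x : Fin n → ℝ}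
    (hΦ : ContDiffAt ℝ 2 Φ x) (hh : ∀ t, HasDerivAt h (h' t) t)
    (hh' : HasDerivAt h' d (Φ x)) :
    hessian (fun y => h (Φ y)) x =
      h' (Φ x) • hessian Φ x + d • vecMulVec (grad Φ x) (grad Φ x) := by
  ext i j
  have hgrad : partialDeriv' (fun y => h (Φ y)) j =ᶠ[nhds x]
      fun y => h' (Φ y) * partialDeriv' Φ j y := by
    filter_upwards [hΦ.eventually (by simp)] with y hy
    exact partialDeriv'_comp (hy.differentiableAt (by norm_num)) (hh _) j
  have hprod := (hh'.comp_hasFDerivAt x (hΦ.differentiableAt (by norm_num)).hasFDerivAt).mul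
    (hΦ.differentiableAt_partialDeriv' j).hasFDerivAt
  change fderiv ℝ (partialDeriv' (fun y => h (Φ y)) j) x (Pi.single i 1) = _
  rw [hgrad.fderiv_eq, show (fun y => h' (Φ y) * partialDeriv' Φ j y) = h' ∘ Φ * partialDeriv' Φ j
    from rfl, hprod.fderiv]
  simp only [Function.comp_apply, partialDeriv', _root_.add_apply, _root_.smul_apply, smul_eq_mul,
    hessian, smul_of, Matrix.add_apply, of_apply, Pi.smul_apply, Matrix.smul_apply, vecMulVec_apply,
    grad, add_right_inj]
  ring

theorem gradNorm_comp {Φ : (Fin n → ℝ) → ℝ} {h : ℝ → ℝ} {d : ℝ} {x : Fin n → ℝ}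
    (hΦ : DifferentiableAt ℝ Φ x) (hh : HasDerivAt h d (Φ x)) :
    gradNorm (fun y => h (Φ y)) x = |d| * gradNorm Φ x := by
  simp only [gradNorm, partialDeriv'_comp hΦ hh, mul_pow, ← Finset.mul_sum]
  rw [Real.sqrt_mul (sq_nonneg _), Real.sqrt_sq_eq_abs]

theorem gradNorm_nonneg (f : (Fin n → ℝ) → ℝ) (x : Fin n → ℝ) : 0 ≤ gradNorm f x :=
  Real.sqrt_nonneg _

theorem Matrix.trace_mul_vecMulVec_self (A : Matrix (Fin n) (Fin n) ℝ) (v : Fin n → ℝ) :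
    trace (A * vecMulVec v v) = ∑ i, ∑ j, A i j * v j * v i := by
  rw [mul_vecMulVec, trace_vecMulVec]
  simp [dotProduct, mulVec, Finset.sum_mul]

theorem Matrix.PosSemidef.sum_sum_mul_nonneg {A : Matrix (Fin n) (Fin n) ℝ} (hA : A.PosSemidef)
    (v : Fin n → ℝ) : 0 ≤ ∑ i, ∑ j, A i j * v j * v i := by
  simpa [dotProduct, mulVec, Finset.mul_sum, mul_comm, mul_left_comm] using
    hA.dotProduct_mulVec_nonneg v

theorem trace_mul_hessian_comp {Φ : (Fin n → ℝ) → ℝ} {h h' : ℝ → ℝ} {d : ℝ} {x : Fin n → ℝ}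
    (hΦ : ContDiffAt ℝ 2 Φ x) (hh : ∀ t, HasDerivAt h (h' t) t)
    (hh' : HasDerivAt h' d (Φ x)) (A : Matrix (Fin n) (Fin n) ℝ) :
    trace (A * hessian (fun y => h (Φ y)) x) = h' (Φ x) * trace (A * hessian Φ x) +
      d * ∑ i, ∑ j, A i j * partialDeriv' Φ j x * partialDeriv' Φ i x := by
  rw [hessian_comp hΦ hh hh', mul_add, mul_smul_comm, mul_smul_comm, trace_add, trace_smul,
    trace_smul, trace_mul_vecMulVec_self, smul_eq_mul, smul_eq_mul]
  rfl

theorem hasDerivAt_one_sub_exp_neg_mul (a t : ℝ) :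
    HasDerivAt (fun t => 1 - Real.exp (-a * t)) (a * Real.exp (-a * t)) t := by
  refine (((hasDerivAt_id t).const_mul (-a)).exp.const_sub 1).congr_deriv ?_
  simp only [id, mul_one]
  ring

theorem hasDerivAt_mul_exp_neg_mul (a t : ℝ) :
    HasDerivAt (fun t => a * Real.exp (-a * t)) (-a * (a * Real.exp (-a * t))) t := by
  refine (((hasDerivAt_id t).const_mul (-a)).exp.const_mul a).congr_deriv ?_
  simp only [id, mul_one]
  ring

theorem barrier_estimate {t a M c K G T Q : ℝ} (hM : 0 ≤ M) (haM : M ≤ a) (hc : 0 ≤ c)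
    (hcK : c ≤ K) (hG : 0 ≤ G) (hT : 0 ≤ T) (hQ : 0 ≤ Q) (ht : t ≤ M * (1 + G + T + Q)) :
    c * t - a * c * Q ≤ M * (1 + K) * (1 + c * G + T) := by
  have h1 : c * t - a * c * Q ≤ c * M * (1 + G + T) := by
    nlinarith [mul_le_mul_of_nonneg_left ht hc, mul_nonneg hc (mul_nonneg (sub_nonneg.2 haM) hQ)]
  nlinarith [mul_le_mul_of_nonneg_right hcK (mul_nonneg hM (add_nonneg zero_le_one hT)),
    mul_nonneg hM (mul_nonneg hc hG), mul_nonneg (mul_nonneg hM hc) hG, mul_nonneg hM hT,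
    mul_nonneg (mul_nonneg hM (hc.trans hcK)) (mul_nonneg hc hG)]

end

/-- Exponential barrier transformation.  Let `Ω ⊆ ℝⁿ` be open, `Φ : Ω → ℝ` be `C²` and
bounded on `Ω` (say `|Φ| ≤ B` on `Ω`), `A : Ω → ` (symmetric positive semidefinite
matrices), and `M > 0`.  If at every `x ∈ Ω`
`tr(A(x)·Hess Φ(x)) ≤ M (1 + |∇Φ(x)| + tr A(x) + ⟨A(x)∇Φ(x), ∇Φ(x)⟩)`,
then for every `a₀ ≥ M` there is `M' > 0`, depending only on `M`, `a₀` and `B`, such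
that `Φ̃ = 1 − e^{−a₀Φ}` satisfies
`tr(A(x)·Hess Φ̃(x)) ≤ M' (1 + |∇Φ̃(x)| + tr A(x))` at every `x ∈ Ω`. -/
theorem exp_barrier_transform (n : ℕ) (Ω : Set (Fin n → ℝ)) (hΩ : IsOpen Ω)
    (Φ : (Fin n → ℝ) → ℝ) (hΦ : ContDiffOn ℝ 2 Φ Ω)
    (B : ℝ) (hB : ∀ x ∈ Ω, |Φ x| ≤ B)
    (A : (Fin n → ℝ) → Matrix (Fin n) (Fin n) ℝ) (hA : ∀ x ∈ Ω, (A x).PosSemidef)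
    (M : ℝ) (hM : 0 < M)
    (hineq : ∀ x ∈ Ω,
      Matrix.trace (A x * hessian Φ x) ≤
        M * (1 + gradNorm Φ x + Matrix.trace (A x) +
          ∑ i, ∑ j, A x i j * partialDeriv' Φ j x * partialDeriv' Φ i x)) :
    ∀ a₀ : ℝ, M ≤ a₀ →
      ∃ M' : ℝ, 0 < M' ∧
        ∀ x ∈ Ω,
          Matrix.trace (A x * hessian (fun y => 1 - Real.exp (-a₀ * Φ y)) x) ≤
            M' * (1 + gradNorm (fun y => 1 - Real.exp (-a₀ * Φ y)) x +
              Matrix.trace (A x)) := by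
  intro a₀ ha₀
  have ha₀0 : 0 < a₀ := hM.trans_le ha₀
  refine ⟨M * (1 + a₀ * Real.exp (a₀ * B)), by positivity, fun x hx => ?_⟩
  have hΦx : ContDiffAt ℝ 2 Φ x := hΦ.contDiffAt (hΩ.mem_nhds hx)
  have hc : a₀ * Real.exp (-a₀ * Φ x) ≤ a₀ * Real.exp (a₀ * B) := by
    refine mul_le_mul_of_nonneg_left (Real.exp_le_exp.2 ?_) ha₀0.le
    nlinarith [neg_abs_le (Φ x), hB x hx]
  rw [trace_mul_hessian_comp hΦx
      (hasDerivAt_one_sub_exp_neg_mul a₀) (hasDerivAt_mul_exp_neg_mul a₀ (Φ x)),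
    gradNorm_comp (hΦx.differentiableAt (by norm_num)) (hasDerivAt_one_sub_exp_neg_mul a₀ _),
    abs_of_pos (by positivity)]
  linarith [barrier_estimate hM.le ha₀ (by positivity) hc (gradNorm_nonneg Φ x)
    (hA x hx).trace_nonneg ((hA x hx).sum_sum_mul_nonneg _) (hineq x hx)]
end
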